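/- arXiv:1604.06247 — 2 statements merged into one kernel-verified Lean document; each statement's English description precedes it below -/
import Mathlib

section
/- Let R be a commutative ring, φ : E → F a homomorphism of finitely generated free R-modules with rank(F) = m, and 1 ≤ j ≤ m. Define φ_{m+1-j} : E ⊗ Λ^{m-j}F → Λ^{m+1-j}F by a ⊗ w ↦ φ(a) ∧ w. Then ann(coker(φ_{m+1-j})) = ann(Λ^{m+1-j}(coker φ)). -/
/-!
The projection `F → F ⧸ im φ` induces a surjection `⋀^(p+1) F → ⋀^(p+1) (F ⧸ im φ)` which kills
the image of `ψ : a ⊗ w ↦ φ a ∧ w`. Conversely, `v ↦ v₀ ∧ ⋯ ∧ vₚ mod im ψ` is alternating and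
vanishes as soon as one `vᵢ` lies in `im φ` (by alternation it suffices to look at `v₀`, where the
wedge is a value of `ψ`), so it descends to `F ⧸ im φ` and gives an inverse. Hence
`coker ψ ≅ ⋀^(p+1) (coker φ)`, and isomorphic modules have the same annihilator.
-/

open TensorProduct

namespace AlternatingMap

variable {R M P ι : Type*} [CommRing R] [AddCommGroup M] [Module R M]
  [AddCommGroup P] [Module R P] [DecidableEq ι] {N : Submodule R M}

theorem map_eq_zero_of_mem (f : M [⋀^ι]→ₗ[R] P) (i₀ : ι) (hf : ∀ v, v i₀ ∈ N → f v = 0)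
    (v : ι → M) (i : ι) (hv : v i ∈ N) : f v = 0 := by
  rcases eq_or_ne i₀ i with rfl | hi
  · exact hf v hv
  · rw [← neg_eq_zero, ← f.map_swap v hi]
    exact hf _ (by simpa using hv)

variable [Fintype ι]

-- Expanding `f ((v - w) + w)` multilinearly, every term except `f w` has an entry in `N`.
theorem map_eq_of_mk_eq (f : M [⋀^ι]→ₗ[R] P) (hf : ∀ v i, v i ∈ N → f v = 0) {v w : ι → M}
    (hvw : ∀ i, (Submodule.Quotient.mk (v i) : M ⧸ N) = Submodule.Quotient.mk (w i)) :
    f v = f w := by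
  rw [← sub_add_cancel v w, f.map_add_univ, Finset.sum_eq_single ∅]
  · simp
  · intro s _ hs
    obtain ⟨i, hi⟩ := Finset.nonempty_iff_ne_empty.mpr hs
    refine hf _ i ?_
    rw [Finset.piecewise_eq_of_mem _ _ _ hi]
    exact (Submodule.Quotient.eq N).mp (hvw i)
  · simp

noncomputable def liftQuotient (f : M [⋀^ι]→ₗ[R] P) (N : Submodule R M)
    (hf : ∀ v i, v i ∈ N → f v = 0) : (M ⧸ N) [⋀^ι]→ₗ[R] P where
  toFun u := f (Quotient.out ∘ u)
  map_update_add' u i x y := by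
    simp only [Function.comp_update]
    rw [map_eq_of_mk_eq f hf (w := Function.update (Quotient.out ∘ u) i (x.out + y.out)),
      f.map_update_add]
    intro k
    rcases eq_or_ne k i with rfl | hk
    · simp [Submodule.Quotient.mk_out]
    · simp [hk]
  map_update_smul' u i c x := by
    simp only [Function.comp_update]
    rw [map_eq_of_mk_eq f hf (w := Function.update (Quotient.out ∘ u) i (c • x.out)),
      f.map_update_smul]
    intro k
    rcases eq_or_ne k i with rfl | hk
    · simp [Submodule.Quotient.mk_out]
    · simp [hk]
  map_eq_zero_of_eq' u _ _ hij hne := f.map_eq_zero_of_eq (Quotient.out ∘ u) (by simp [hij]) hne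

theorem liftQuotient_mkQ_comp (f : M [⋀^ι]→ₗ[R] P) (hf : ∀ v i, v i ∈ N → f v = 0)
    (v : ι → M) : f.liftQuotient N hf (N.mkQ ∘ v) = f v :=
  map_eq_of_mk_eq f hf fun _ => Submodule.Quotient.mk_out _

end AlternatingMap

namespace exteriorPower

variable {R M N : Type*} [CommRing R] [AddCommGroup M] [Module R M] [AddCommGroup N] [Module R N]

theorem coe_map (n : ℕ) (f : M →ₗ[R] N) (x : ⋀[R]^n M) :
    (map n f x : ExteriorAlgebra R N) = ExteriorAlgebra.map f x := by
  have : (⋀[R]^n N).subtype ∘ₗ map n f =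
      (ExteriorAlgebra.map f).toLinearMap ∘ₗ (⋀[R]^n M).subtype := by
    ext v
    simp [ExteriorAlgebra.map_apply_ιMulti]
  exact LinearMap.congr_fun this x

end exteriorPower

section KoszulMap

variable {R E F : Type*} [CommRing R] [AddCommGroup E] [Module R E] [AddCommGroup F] [Module R F]
  {φ : E →ₗ[R] F} {p : ℕ} {ψ : E ⊗[R] ⋀[R]^p F →ₗ[R] ⋀[R]^(p + 1) F}

theorem range_le_ker_exteriorPower_map_mkQ
    (hψ : ∀ (a : E) (w : ⋀[R]^p F),
      (ψ (a ⊗ₜ[R] w) : ExteriorAlgebra R F) = ExteriorAlgebra.ι R (φ a) * w) :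
    LinearMap.range ψ ≤ LinearMap.ker (exteriorPower.map (p + 1) (LinearMap.range φ).mkQ) := by
  rintro _ ⟨t, rfl⟩
  induction t using TensorProduct.induction_on with
  | zero => simp
  | tmul a w =>
    rw [LinearMap.mem_ker, ← Submodule.coe_eq_zero, exteriorPower.coe_map, hψ, map_mul,
      ExteriorAlgebra.map_apply_ι, Submodule.mkQ_apply,
      (Submodule.Quotient.mk_eq_zero _).mpr (LinearMap.mem_range_self φ a), map_zero, zero_mul]
  | add t₁ t₂ h₁ h₂ => rw [map_add]; exact add_mem h₁ h₂

theorem mkQ_range_ιMulti_eq_zero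
    (hψ : ∀ (a : E) (w : ⋀[R]^p F),
      (ψ (a ⊗ₜ[R] w) : ExteriorAlgebra R F) = ExteriorAlgebra.ι R (φ a) * w)
    (v : Fin (p + 1) → F) (hv : v 0 ∈ LinearMap.range φ) :
    (LinearMap.range ψ).mkQ (exteriorPower.ιMulti R (p + 1) v) = 0 := by
  obtain ⟨a, ha⟩ := hv
  rw [Submodule.mkQ_apply, Submodule.Quotient.mk_eq_zero]
  refine ⟨a ⊗ₜ[R] exteriorPower.ιMulti R p (Matrix.vecTail v), Subtype.ext ?_⟩
  rw [hψ, exteriorPower.ιMulti_apply_coe, exteriorPower.ιMulti_apply_coe,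
    ExteriorAlgebra.ιMulti_succ_apply, ha]

theorem exists_comp_exteriorPower_map_mkQ_eq_mkQ
    (hψ : ∀ (a : E) (w : ⋀[R]^p F),
      (ψ (a ⊗ₜ[R] w) : ExteriorAlgebra R F) = ExteriorAlgebra.ι R (φ a) * w) :
    ∃ g : ⋀[R]^(p + 1) (F ⧸ LinearMap.range φ) →ₗ[R] ⋀[R]^(p + 1) F ⧸ LinearMap.range ψ,
      g ∘ₗ exteriorPower.map (p + 1) (LinearMap.range φ).mkQ = (LinearMap.range ψ).mkQ := by
  set A := (LinearMap.range ψ).mkQ.compAlternatingMap (exteriorPower.ιMulti R (p + 1))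
  have hA := A.map_eq_zero_of_mem 0 (mkQ_range_ιMulti_eq_zero hψ)
  refine ⟨exteriorPower.alternatingMapLinearEquiv (A.liftQuotient _ hA), ?_⟩
  ext v
  simp [A, AlternatingMap.liftQuotient_mkQ_comp]

theorem ker_exteriorPower_map_mkQ_eq_range
    (hψ : ∀ (a : E) (w : ⋀[R]^p F),
      (ψ (a ⊗ₜ[R] w) : ExteriorAlgebra R F) = ExteriorAlgebra.ι R (φ a) * w) :
    LinearMap.ker (exteriorPower.map (p + 1) (LinearMap.range φ).mkQ) = LinearMap.range ψ := by
  refine le_antisymm (fun x hx => ?_) (range_le_ker_exteriorPower_map_mkQ hψ)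
  obtain ⟨g, hg⟩ := exists_comp_exteriorPower_map_mkQ_eq_mkQ hψ
  rw [← Submodule.Quotient.mk_eq_zero, ← Submodule.mkQ_apply, ← hg, LinearMap.comp_apply,
    LinearMap.mem_ker.mp hx, map_zero]

theorem annihilator_quotient_range_eq
    (hψ : ∀ (a : E) (w : ⋀[R]^p F),
      (ψ (a ⊗ₜ[R] w) : ExteriorAlgebra R F) = ExteriorAlgebra.ι R (φ a) * w) :
    Module.annihilator R (⋀[R]^(p + 1) F ⧸ LinearMap.range ψ) =
      Module.annihilator R (⋀[R]^(p + 1) (F ⧸ LinearMap.range φ)) :=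
  ((Submodule.quotEquivOfEq _ _ (ker_exteriorPower_map_mkQ_eq_range hψ).symm).trans
    (LinearMap.quotKerEquivOfSurjective _
      (exteriorPower.map_surjective (LinearMap.range φ).mkQ_surjective))).annihilator_eq

end KoszulMap

theorem stmt9_general {R : Type*} [CommRing R] {E F : Type*}
    [AddCommGroup E] [Module R E]
    [AddCommGroup F] [Module R F]
    {m : ℕ} (φ : E →ₗ[R] F)
    (j : ℕ) (hjm : j ≤ m)
    (ψ : (E ⊗[R] ↥(⋀[R]^(m - j) F)) →ₗ[R] ↥(⋀[R]^(m + 1 - j) F))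
    (hψ : ∀ (a : E) (w : ⋀[R]^(m - j) F),
      (ψ (a ⊗ₜ[R] w) : ExteriorAlgebra R F) =
        ExteriorAlgebra.ι R (φ a) * (w : ExteriorAlgebra R F)) :
    Module.annihilator R (↥(⋀[R]^(m + 1 - j) F) ⧸ LinearMap.range ψ) =
      Module.annihilator R ↥(⋀[R]^(m + 1 - j) (F ⧸ LinearMap.range φ)) := by
  generalize hq : m + 1 - j = q at ψ hψ ⊢
  generalize hp : m - j = p at ψ hψ
  obtain rfl : q = p + 1 := by omega
  exact annihilator_quotient_range_eq hψ

theorem stmt9 {R : Type*} [CommRing R] {E F : Type*}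
    [AddCommGroup E] [Module R E] [Module.Free R E] [Module.Finite R E]
    [AddCommGroup F] [Module R F] [Module.Free R F] [Module.Finite R F]
    {m : ℕ} (hF : Module.rank R F = m) (φ : E →ₗ[R] F)
    (j : ℕ) (hj1 : 1 ≤ j) (hjm : j ≤ m)
    (ψ : (E ⊗[R] ↥(⋀[R]^(m - j) F)) →ₗ[R] ↥(⋀[R]^(m + 1 - j) F))
    (hψ : ∀ (a : E) (w : ⋀[R]^(m - j) F),
      (ψ (a ⊗ₜ[R] w) : ExteriorAlgebra R F) =
        ExteriorAlgebra.ι R (φ a) * (w : ExteriorAlgebra R F)) :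
    Module.annihilator R (↥(⋀[R]^(m + 1 - j) F) ⧸ LinearMap.range ψ) =
      Module.annihilator R ↥(⋀[R]^(m + 1 - j) (F ⧸ LinearMap.range φ)) :=
  stmt9_general φ j hjm ψ hψ
end

section
/- Let k be a field and V the k-vector space of m×m matrices. For a generic matrix A ∈ Mat_{m×m}(k), the space {U ∈ Mat_{m×m}(k) : UA + AUᵀ = 0} has dimension at least ⌊m/2⌋; equivalently the image of the map U ↦ UA + AUᵀ has codimension at least ⌊m/2⌋ in Mat_{m×m}(k). -/
/-!
For invertible `A` put `Φ = A (Aᵀ)⁻¹`. Then `Φᵏ - Φ⁻ᵏ` solves `UA + AUᵀ = 0` for every `k`;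
multiplied by `(det A)ᵏ` these become polynomial expressions in the entries of `A` (built from
the adjugate) that solve the equation for every matrix. For `A₀ = diag(2⁰, …, 2^{m-1}) · J`, with
`J` the reversal permutation, `Φ` is diagonal with pairwise distinct entries `λᵢ ∉ {0, -1}`, and
the solutions for `k = 1, …, n = ⌊m/2⌋` are linearly independent: a dependence `Σ cₖ (Φᵏ - Φ⁻ᵏ)`
gives the polynomial `xⁿ Σ cₖ (xᵏ - x⁻ᵏ)` of degree `≤ 2n`, which vanishes at the `m ≥ 2n`
points `λᵢ` and at `-1`.

For an arbitrary `A`, consider the line `A + X (A₀ - A)` over `k(X)`. Linear independence at a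
specialization `X = t` lifts to `k(X)`. At `X = 1` this gives `n` independent solutions over
`k(X)`; at `X = 0` it shows that the rank of `U ↦ UA + AUᵀ` is at most its rank over `k(X)`.
-/

/-- The linear map `U ↦ U·A + A·Uᵀ` on `m × m` matrices. -/
def congrTangentMap {k : Type*} [Field k] {m : ℕ} (A : Matrix (Fin m) (Fin m) k) :
    Matrix (Fin m) (Fin m) k →ₗ[k] Matrix (Fin m) (Fin m) k where
  toFun U := U * A + A * U.transpose
  map_add' U V := by
    simp [Matrix.add_mul, Matrix.mul_add, Matrix.transpose_add]
    abel
  map_smul' c U := by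
    simp [Matrix.smul_mul, Matrix.mul_smul, Matrix.transpose_smul, smul_add]

open Matrix Polynomial

section Specialization

variable {k : Type*} [Field k] {ι n : Type*} [Fintype ι] [Fintype n] [DecidableEq n]

theorem X_sub_C_pow_dvd_of_linearIndependent_eval (t : k) {v : ι → Matrix n n k[X]}
    (hv : LinearIndependent k fun i => (v i).map (evalRingHom t)) (j : ℕ) :
    ∀ p : ι → k[X], ∑ i, p i • v i = 0 → ∀ i, (X - C t) ^ j ∣ p i := by
  induction j with
  | zero => simp
  | succ j ih =>
    intro p hp i
    have hroot : ∀ i, (p i).IsRoot t := by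
      refine Fintype.linearIndependent_iff.mp hv (fun i => (p i).eval t) ?_
      have hsmul (q : k[X]) (M : Matrix n n k[X]) :
          (q • M).map (eval t) = q.eval t • M.map (eval t) := by
        ext; simp
      simpa [map_sum, hsmul] using congrArg (evalRingHom t).mapMatrix hp
    have hq : ∑ i, (p i /ₘ (X - C t)) • v i = 0 := by
      refine smul_right_injective _ (X_sub_C_ne_zero t) ?_
      simp only [Finset.smul_sum, smul_smul, mul_divByMonic_eq_iff_isRoot.mpr (hroot _), hp,
        smul_zero]
    rw [pow_succ', ← mul_divByMonic_eq_iff_isRoot.mpr (hroot i)]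
    exact mul_dvd_mul_left _ (ih _ hq i)

theorem linearIndependent_of_linearIndependent_eval (t : k) {v : ι → Matrix n n k[X]}
    (hv : LinearIndependent k fun i => (v i).map (evalRingHom t)) :
    LinearIndependent k[X] v := by
  refine Fintype.linearIndependent_iff.mpr fun p hp i => ?_
  refine eq_zero_of_dvd_of_natDegree_lt
    (X_sub_C_pow_dvd_of_linearIndependent_eval t hv ((p i).natDegree + 1) p hp i) ?_
  rw [natDegree_pow, natDegree_X_sub_C, mul_one]
  exact (p i).natDegree.lt_succ_self

theorem linearIndependent_fractionRing_of_eval (t : k) {v : ι → Matrix n n k[X]}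
    (hv : LinearIndependent k fun i => (v i).map (evalRingHom t)) :
    LinearIndependent (FractionRing k[X])
      fun i => (v i).map (algebraMap k[X] (FractionRing k[X])) := by
  rw [← LinearIndependent.iff_fractionRing k[X]]
  refine (linearIndependent_of_linearIndependent_eval t hv).map'
    (Algebra.linearMap k[X] (FractionRing k[X])).mapMatrix ?_
  rw [LinearMap.ker_eq_bot]
  exact Matrix.map_injective (IsFractionRing.injective k[X] (FractionRing k[X]))

end Specialization

theorem linearIndependent_pow_sub_inv_pow {F ι : Type*} [Field F] [Fintype ι] {n : ℕ}
    {μ : ι → F} (hinj : Function.Injective μ) (hμ0 : ∀ i, μ i ≠ 0) (hμ1 : ∀ i, μ i ≠ -1)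
    (hn : 2 * n ≤ Fintype.card ι) :
    LinearIndependent F fun k : Fin n => fun i => μ i ^ (k + 1 : ℕ) - (μ i)⁻¹ ^ (k + 1 : ℕ) := by
  rw [Fintype.linearIndependent_iff]
  intro c hc
  set P : F[X] := ∑ k : Fin n, C (c k) * (X ^ (n + (k + 1)) - X ^ (n - (k + 1))) with hPdef
  have heval : ∀ x : F, x ≠ 0 →
      P.eval x = x ^ n * ∑ k : Fin n, c k * (x ^ (k + 1 : ℕ) - x⁻¹ ^ (k + 1 : ℕ)) := by
    intro x hx
    simp only [hPdef, eval_finsetSum, eval_mul, eval_C, eval_sub, eval_X_pow, Finset.mul_sum]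
    refine Finset.sum_congr rfl fun k _ => ?_
    rw [pow_add, pow_sub₀ _ hx (by omega), inv_pow]
    ring
  have hneg : ∀ k : Fin n, ((-1 : F) ^ (n + (k + 1)) - (-1) ^ (n - (k + 1))) = 0 := by
    intro k
    rw [show n + (k + 1) = n - (k + 1) + 2 * (k + 1) by omega, pow_add, pow_mul, neg_one_sq,
      one_pow, mul_one, sub_self]
  have hP : P = 0 := by
    refine eq_zero_of_natDegree_lt_card_of_eval_eq_zero P (f := fun o : Option ι => o.elim (-1) μ)
      ?_ ?_ ?_
    · rintro (_ | i) (_ | j) h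
      · rfl
      · exact absurd h.symm (hμ1 j)
      · exact absurd h (hμ1 i)
      · exact congrArg some (hinj h)
    · rintro (_ | i)
      · simp [hPdef, eval_finsetSum, hneg]
      · rw [Option.elim_some, heval _ (hμ0 i)]
        have hci := congrFun hc i
        simp only [Finset.sum_apply, Pi.smul_apply, smul_eq_mul, Pi.zero_apply] at hci
        rw [hci, mul_zero]
    · rw [Fintype.card_option]
      refine lt_of_le_of_lt (natDegree_sum_le_of_forall_le _ _ (n := 2 * n) fun k _ => ?_)
        (by omega)
      refine (natDegree_C_mul_le _ _).trans ((natDegree_sub_le _ _).trans ?_)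
      simp only [natDegree_X_pow]
      omega
  intro k
  have hcoeff := congrArg (coeff · (n + (k + 1))) hP
  simp only [hPdef, finsetSum_coeff, coeff_C_mul, coeff_sub, coeff_X_pow, coeff_zero] at hcoeff
  have hterm (j : Fin n) : c j * ((if n + (k + 1 : ℕ) = n + (j + 1 : ℕ) then 1 else 0)
      - if n + (k + 1 : ℕ) = n - (j + 1 : ℕ) then 1 else 0) = if k = j then c j else 0 := by
    rw [if_neg (show n + (k + 1 : ℕ) ≠ n - (j + 1 : ℕ) by omega)]
    by_cases h : k = j <;> simp [h, Fin.val_ne_of_ne]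
  rwa [Finset.sum_congr rfl fun j _ => hterm j, Finset.sum_ite_eq,
    if_pos (Finset.mem_univ k)] at hcoeff

section AdjCosquare

variable {R : Type*} [CommRing R] {ι : Type*} [Fintype ι] [DecidableEq ι]

theorem adjugate_eq_det_smul_of_mul_eq_one {A B : Matrix ι ι R} (h : A * B = 1) :
    adjugate A = A.det • B := by
  rw [← mul_one (adjugate A), ← h, ← mul_assoc, adjugate_mul, smul_mul, one_mul]

/-- `det A • A (Aᵀ)⁻¹` when `A` is invertible. -/
def adjCosquare (A : Matrix ι ι R) : Matrix ι ι R := A * (adjugate A)ᵀ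

def adjCosquarePowSub (A : Matrix ι ι R) (k : ℕ) : Matrix ι ι R :=
  adjCosquare A ^ k - adjCosquare Aᵀ ^ k

theorem mul_adjugate_mul_transpose_pow (A : Matrix ι ι R) (k : ℕ) :
    A * (adjugate A * Aᵀ) ^ k = (Aᵀ * adjugate A) ^ k * A := by
  cases k with
  | zero => simp
  | succ k =>
    calc A * (adjugate A * Aᵀ) ^ (k + 1)
        = (A * adjugate A) * (Aᵀ * (adjugate A * Aᵀ) ^ k) := by
          simp only [pow_succ', mul_assoc]
      _ = (Aᵀ * adjugate A) ^ k * Aᵀ * (adjugate A * A) := by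
          rw [mul_adjugate, adjugate_mul, smul_mul, one_mul, Matrix.mul_smul, mul_one,
            mul_pow_mul]
      _ = (Aᵀ * adjugate A) ^ (k + 1) * A := by
          simp only [pow_succ, mul_assoc]

theorem adjCosquarePowSub_mul_add_mul_transpose (A : Matrix ι ι R) (k : ℕ) :
    adjCosquarePowSub A k * A + A * (adjCosquarePowSub A k)ᵀ = 0 := by
  simp only [adjCosquarePowSub, adjCosquare, transpose_sub, transpose_pow, transpose_mul,
    transpose_transpose, adjugate_transpose, sub_mul, mul_sub, mul_pow_mul,
    mul_adjugate_mul_transpose_pow]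
  abel

theorem map_adjCosquarePowSub {S : Type*} [CommRing S] (f : R →+* S) (A : Matrix ι ι R)
    (k : ℕ) : (adjCosquarePowSub A k).map f = adjCosquarePowSub (A.map f) k := by
  have hT (M : Matrix ι ι R) : f.mapMatrix Mᵀ = (f.mapMatrix M)ᵀ := (transpose_map ..).symm
  change f.mapMatrix _ = _
  simp only [adjCosquarePowSub, adjCosquare, map_sub, map_pow, map_mul, hT, f.map_adjugate]
  rfl

end AdjCosquare

section MonomialMatrix

variable {ι : Type*} [DecidableEq ι] {σ : ι → ι}

def monomialMatrix {R : Type*} [Zero R] (σ : ι → ι) (d : ι → R) : Matrix ι ι R :=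
  of fun i j => if j = σ i then d i else 0

theorem transpose_monomialMatrix {R : Type*} [Zero R] (hσ : Function.Involutive σ) (d : ι → R) :
    (monomialMatrix σ d)ᵀ = monomialMatrix σ (d ∘ σ) := by
  ext i j
  simp only [monomialMatrix, transpose_apply, of_apply, Function.comp_apply]
  by_cases h : j = σ i
  · subst h; simp [hσ i]
  · rw [if_neg h, if_neg fun h' => h (by rw [h', hσ j])]

variable [Fintype ι]

theorem monomialMatrix_mul_monomialMatrix {R : Type*} [CommRing R] (hσ : Function.Involutive σ)
    (a b : ι → R) :
    monomialMatrix σ a * monomialMatrix σ b = diagonal fun i => a i * b (σ i) := by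
  ext i j
  rw [mul_apply, Finset.sum_eq_single (σ i) (fun l _ hl => by simp [monomialMatrix, hl])
    (by simp)]
  rcases eq_or_ne i j with rfl | h
  · simp [monomialMatrix, hσ i]
  · simp [monomialMatrix, hσ i, h, Ne.symm h]

variable {F : Type*} [Field F]

theorem monomialMatrix_mul_inv (hσ : Function.Involutive σ) {d : ι → F} (hd : ∀ i, d i ≠ 0) :
    monomialMatrix σ d * monomialMatrix σ (fun i => (d (σ i))⁻¹) = 1 := by
  rw [monomialMatrix_mul_monomialMatrix hσ, ← diagonal_one]
  simp [hσ _, hd]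

theorem adjCosquare_monomialMatrix (hσ : Function.Involutive σ) {d : ι → F}
    (hd : ∀ i, d i ≠ 0) :
    adjCosquare (monomialMatrix σ d) =
      (monomialMatrix σ d).det • diagonal fun i => d i / d (σ i) := by
  rw [adjCosquare, adjugate_eq_det_smul_of_mul_eq_one (monomialMatrix_mul_inv hσ hd),
    transpose_smul, transpose_monomialMatrix hσ, Matrix.mul_smul,
    monomialMatrix_mul_monomialMatrix hσ]
  simp [hσ _, div_eq_mul_inv]

theorem adjCosquarePowSub_monomialMatrix (hσ : Function.Involutive σ) {d : ι → F}
    (hd : ∀ i, d i ≠ 0) (k : ℕ) :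
    adjCosquarePowSub (monomialMatrix σ d) k = (monomialMatrix σ d).det ^ k •
      diagonal fun i => (d i / d (σ i)) ^ k - (d i / d (σ i))⁻¹ ^ k := by
  have hdet : (monomialMatrix σ (d ∘ σ)).det = (monomialMatrix σ d).det := by
    rw [← transpose_monomialMatrix hσ, det_transpose]
  rw [adjCosquarePowSub, transpose_monomialMatrix hσ, adjCosquare_monomialMatrix hσ hd,
    adjCosquare_monomialMatrix hσ (d := d ∘ σ) fun i => hd (σ i), hdet, _root_.smul_pow,
    _root_.smul_pow, diagonal_pow, diagonal_pow, ← smul_sub, diagonal_sub]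
  simp [hσ _, inv_div]

theorem linearIndependent_adjCosquarePowSub_monomialMatrix (hσ : Function.Involutive σ)
    {d : ι → F} (hd : ∀ i, d i ≠ 0) (hinj : Function.Injective fun i => d i / d (σ i))
    (hneg : ∀ i, d i / d (σ i) ≠ -1) {n : ℕ} (hn : 2 * n ≤ Fintype.card ι) :
    LinearIndependent F fun k : Fin n => adjCosquarePowSub (monomialMatrix σ d) (k + 1) := by
  have hdet := (isUnit_det_of_right_inverse (monomialMatrix_mul_inv hσ hd)).ne_zero
  have hv := (linearIndependent_pow_sub_inv_pow hinj (fun i => div_ne_zero (hd i) (hd (σ i)))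
    hneg hn).map' (diagonalLinearMap ι F F) (LinearMap.ker_eq_bot.mpr diagonal_injective)
  have hfam : (fun k : Fin n => adjCosquarePowSub (monomialMatrix σ d) (k + 1)) =
      (fun k : Fin n => Units.mk0 _ (pow_ne_zero (k + 1 : ℕ) hdet)) •
        (diagonalLinearMap ι F F ∘ fun (k : Fin n) i =>
          (d i / d (σ i)) ^ (k + 1 : ℕ) - (d i / d (σ i))⁻¹ ^ (k + 1 : ℕ)) :=
    funext fun k => adjCosquarePowSub_monomialMatrix hσ hd _
  rw [hfam]
  exact hv.units_smul _

end MonomialMatrix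

theorem exists_linearIndependent_adjCosquarePowSub (F : Type*) [Field F] [CharZero F] (m : ℕ) :
    ∃ A : Matrix (Fin m) (Fin m) F,
      LinearIndependent F fun k : Fin (m / 2) => adjCosquarePowSub A (k + 1) := by
  refine ⟨monomialMatrix Fin.rev fun i => 2 ^ (i : ℕ),
    linearIndependent_adjCosquarePowSub_monomialMatrix Fin.rev_involutive
      (fun i => pow_ne_zero _ two_ne_zero) ?_ (fun i => ?_) (by simp; omega)⟩
  · intro i j h
    simp only at h
    rw [div_eq_div_iff (pow_ne_zero _ two_ne_zero) (pow_ne_zero _ two_ne_zero), ← pow_add,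
      ← pow_add] at h
    have := Nat.pow_right_injective le_rfl (by exact_mod_cast h : 2 ^ _ = 2 ^ _)
    simp only [Fin.val_rev] at this
    exact Fin.ext (by omega)
  · rw [Ne, div_eq_iff (pow_ne_zero _ two_ne_zero), neg_one_mul, eq_neg_iff_add_eq_zero]
    exact_mod_cast (by positivity : 2 ^ (i : ℕ) + 2 ^ (Fin.rev i : ℕ) ≠ 0)

theorem LinearIndependent.fintype_card_le_finrank_of_forall_mem {K V ι : Type*} [Field K]
    [AddCommGroup V] [Module K V] [FiniteDimensional K V] [Fintype ι] {v : ι → V}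
    (hv : LinearIndependent K v) {S : Submodule K V} (hS : ∀ i, v i ∈ S) :
    Fintype.card ι ≤ Module.finrank K S :=
  (LinearIndependent.of_comp S.subtype (v := (fun i => ⟨v i, hS i⟩ : ι → S)) hv
    ).fintype_card_le_finrank

theorem LinearMap.exists_linearIndependent_comp {K V W : Type*} [Field K] [AddCommGroup V]
    [Module K V] [AddCommGroup W] [Module K W] (f : V →ₗ[K] W) :
    ∃ u : Fin (Module.finrank K (LinearMap.range f)) → V, LinearIndependent K (f ∘ u) := by
  obtain ⟨b, hb⟩ := exists_linearIndependent_of_le_finrank (R := K) (M := LinearMap.range f) le_rfl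
  choose u hu using fun j => (b j).2
  refine ⟨u, ?_⟩
  have hfu : f ∘ u = (LinearMap.range f).subtype ∘ b := funext hu
  rw [hfu]
  exact hb.map' _ (Submodule.ker_subtype _)

theorem map_mul_add_mul_transpose {R S ι : Type*} [CommRing R] [CommRing S] [Fintype ι]
    (f : R →+* S) (U A : Matrix ι ι R) :
    (U * A + A * Uᵀ).map f = U.map f * A.map f + A.map f * (U.map f)ᵀ := by
  rw [Matrix.map_add f (map_add f), Matrix.map_mul, Matrix.map_mul, transpose_map]

section TangentMap

variable {k : Type*} [Field k] {m : ℕ}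

local notation "K" => FractionRing k[X]

theorem finrank_range_congrTangentMap_eval_le (B : Matrix (Fin m) (Fin m) k[X]) (t : k) :
    Module.finrank k (LinearMap.range (congrTangentMap (B.map (evalRingHom t)))) ≤
      Module.finrank K (LinearMap.range (congrTangentMap (B.map (algebraMap k[X] K)))) := by
  obtain ⟨U, hU⟩ := (congrTangentMap (B.map (evalRingHom t))).exists_linearIndependent_comp
  set Y := fun j => (U j).map C * B + B * ((U j).map C)ᵀ
  have hY (j) : (Y j).map (evalRingHom t) = congrTangentMap (B.map (evalRingHom t)) (U j) := by
    have hCt : (U j).map (evalRingHom t ∘ C) = U j := by ext; simp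
    rw [map_mul_add_mul_transpose, Matrix.map_map, hCt]
    rfl
  have hlift := linearIndependent_fractionRing_of_eval t (v := Y) (by simp only [hY]; exact hU)
  have hcard := hlift.fintype_card_le_finrank_of_forall_mem
    (S := LinearMap.range (congrTangentMap (B.map (algebraMap k[X] K)))) fun j =>
      ⟨(U j).map (algebraMap k[X] K ∘ C), by rw [map_mul_add_mul_transpose, Matrix.map_map]; rfl⟩
  rwa [Fintype.card_fin] at hcard

theorem finrank_ker_congrTangentMap_le_eval (B : Matrix (Fin m) (Fin m) k[X]) (t : k) :
    Module.finrank K (LinearMap.ker (congrTangentMap (B.map (algebraMap k[X] K)))) ≤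
      Module.finrank k (LinearMap.ker (congrTangentMap (B.map (evalRingHom t)))) := by
  have h₁ := LinearMap.finrank_range_add_finrank_ker (congrTangentMap (B.map (evalRingHom t)))
  have h₂ := LinearMap.finrank_range_add_finrank_ker
    (congrTangentMap (B.map (algebraMap k[X] K)))
  have h₃ := finrank_range_congrTangentMap_eval_le B t
  simp only [Module.finrank_matrix, Fintype.card_fin, Module.finrank_self] at h₁ h₂
  omega

theorem le_finrank_ker_congrTangentMap_of_eval (B : Matrix (Fin m) (Fin m) k[X]) (t : k) {n : ℕ}
    (h : LinearIndependent k fun j : Fin n => adjCosquarePowSub (B.map (evalRingHom t)) (j + 1)) :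
    n ≤ Module.finrank K (LinearMap.ker (congrTangentMap (B.map (algebraMap k[X] K)))) := by
  have hlift := linearIndependent_fractionRing_of_eval t
    (v := fun j : Fin n => adjCosquarePowSub B (j + 1)) (by simpa only [map_adjCosquarePowSub])
  simpa using hlift.fintype_card_le_finrank_of_forall_mem fun j => LinearMap.mem_ker.mpr <| by
    rw [map_adjCosquarePowSub]
    exact adjCosquarePowSub_mul_add_mul_transpose _ _

end TangentMap

theorem stmt17 {k : Type*} [Field k] [CharZero k] {m : ℕ}
    (A : Matrix (Fin m) (Fin m) k) :
    m / 2 ≤ Module.finrank k (LinearMap.ker (congrTangentMap A)) := by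
  obtain ⟨A₀, hA₀⟩ := exists_linearIndependent_adjCosquarePowSub k m
  let B : Matrix (Fin m) (Fin m) k[X] := A.map C + (X : k[X]) • (A₀ - A).map C
  have hB : ∀ t, B.map (evalRingHom t) = A + t • (A₀ - A) := by
    intro t; ext i j; simp [B]
  calc m / 2
      ≤ Module.finrank (FractionRing k[X])
          (LinearMap.ker (congrTangentMap (B.map (algebraMap k[X] (FractionRing k[X]))))) :=
        le_finrank_ker_congrTangentMap_of_eval B 1 (by rwa [hB, one_smul, add_sub_cancel])
    _ ≤ Module.finrank k (LinearMap.ker (congrTangentMap (B.map (evalRingHom 0)))) :=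
        finrank_ker_congrTangentMap_le_eval B 0
    _ = Module.finrank k (LinearMap.ker (congrTangentMap A)) := by rw [hB, zero_smul, add_zero]
end
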